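/- arXiv:1407.1210 — 3 statements merged into one kernel-verified Lean document; each statement's English description precedes it below -/
import Mathlib

section
/- Let C be an isomorphism-closed class of topological spaces that is closed under products and closed under subspaces (i.e. C is an epireflective subcategory of Top). Then the following are equivalent: (1) C is algebraic, i.e. the full subcategory C of topological spaces has coequalizers, its underlying-set functor U : C → Set has a left adjoint, and U preserves and reflects regular epimorphisms; (2) C is the class of all topological spaces with at most one point, or C is the class of all indiscrete topological spaces. -/
universe u

open Topology CategoryTheory CategoryTheory.Limits

/-- A class of topological spaces (in a fixed universe `u`). -/
abbrev TopClass := ∀ X : Type u, TopologicalSpace X → Prop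

/-- `C` is closed under homeomorphisms. -/
def TopClass.IsoClosed (C : TopClass.{u}) : Prop :=
  ∀ (X Y : Type u) (tX : TopologicalSpace X) (tY : TopologicalSpace Y),
    C X tX → Nonempty (@Homeomorph X Y tX tY) → C Y tY

/-- `C` is closed under arbitrary products (with the product topology). -/
def TopClass.ClosedUnderProducts (C : TopClass.{u}) : Prop :=
  ∀ (ι : Type u) (X : ι → Type u) (t : ∀ i, TopologicalSpace (X i)),
    (∀ i, C (X i) (t i)) → C (∀ i, X i) (@Pi.topologicalSpace ι X t)

/-- `C` is closed under subspaces (topological embeddings). -/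
def TopClass.ClosedUnderSubspaces (C : TopClass.{u}) : Prop :=
  ∀ (X Y : Type u) (tX : TopologicalSpace X) (tY : TopologicalSpace Y),
    C X tX → (∃ f : Y → X, @IsEmbedding Y X tY tX f) → C Y tY

/-- A topological space is indiscrete if its only open sets are `∅` and the whole space. -/
def IsIndiscreteTop (X : Type u) (tX : TopologicalSpace X) : Prop :=
  ∀ s : Set X, @IsOpen X tX s → s = ∅ ∨ s = Set.univ

/-- The full subcategory of `TopCat` determined by a class of topological spaces. -/
abbrev TopClass.Cat (C : TopClass.{u}) : Type (u + 1) :=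
  ObjectProperty.FullSubcategory (fun X : TopCat.{u} => C X X.str)

/-- The underlying-set functor of the full subcategory determined by `C`. -/
noncomputable def TopClass.U (C : TopClass.{u}) : C.Cat ⥤ Type u :=
  ObjectProperty.ι _ ⋙ forget TopCat

/-- A concrete category (over `Type u`) is algebraic if it has coequalizers, its
underlying-set functor has a left adjoint and preserves and reflects regular
epimorphisms. -/
def AlgebraicConcreteCategory {D : Type (u + 1)} [Category.{u} D] (U : D ⥤ Type u) : Prop :=
  HasCoequalizers D ∧ U.IsRightAdjoint ∧
    (∀ (A B : D) (f : A ⟶ B), Nonempty (RegularEpi f) → Nonempty (RegularEpi (U.map f))) ∧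
    (∀ (A B : D) (f : A ⟶ B), Nonempty (RegularEpi (U.map f)) → Nonempty (RegularEpi f))

/-!
If `C` is algebraic, a continuous bijection between members of `C` is a regular epimorphism
(its image under `U` is split), hence an isomorphism; so two comparable topologies on one set
that both lie in `C` coincide. If some member `X` had an open set containing `x` but not `y`,
then `z ↦ update (const y) z x` would embed the discrete space `Z = X ^ ℕ` into `X ^ Z`, so both
the discrete and the product topology on `X ^ ℕ` would lie in `C`, and the product topology
would be discrete. Hence all members are indiscrete, and if one of them has two points, every
indiscrete space embeds into a power of it. Conversely, for both classes `U` is fully faithful: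
for indiscrete spaces it is an equivalence, and for subsingletons the category is thin, with
left adjoint `S ↦ Trunc S`.
-/

namespace CategoryTheory.Functor

variable {D : Type (u + 1)} [Category.{u} D] (U : D ⥤ Type u)

lemma regularEpi_of_regularEpi_map [U.Full] [U.Faithful] {A B : D} (f : A ⟶ B)
    (h : Nonempty (RegularEpi (U.map f))) : Nonempty (RegularEpi f) := by
  obtain ⟨hf⟩ := h
  have := hf.epi
  have : IsSplitEpi (U.map f) := isSplitEpi_of_epi _
  have : IsSplitEpi f := (U.isSplitEpi_iff f).1 this
  exact ⟨RegularEpi.ofSplitEpi f⟩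

lemma isIso_of_bijective_map [U.Faithful]
    (hU : ∀ (A B : D) (f : A ⟶ B), Nonempty (RegularEpi (U.map f)) → Nonempty (RegularEpi f))
    {A B : D} (f : A ⟶ B) (hf : Function.Bijective (U.map f)) : IsIso f := by
  have : Epi (U.map f) := (epi_iff_surjective _).2 hf.2
  obtain ⟨hre⟩ := hU A B f ⟨regularEpiOfEpi _⟩
  have : IsRegularEpi f := ⟨⟨hre⟩⟩
  have : Mono (U.map f) := (mono_iff_injective _).2 hf.1
  have : Mono f := U.mono_of_mono_map this
  exact isIso_of_mono_of_strongEpi f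

lemma algebraicConcreteCategory_of_isEquivalence [U.IsEquivalence] :
    AlgebraicConcreteCategory U := by
  refine ⟨Adjunction.hasColimitsOfShape_of_equivalence U, inferInstance, fun A B f ⟨hf⟩ => ?_,
    fun A B f => U.regularEpi_of_regularEpi_map f⟩
  have := hf.epi
  exact ⟨regularEpiOfEpi (U.map f)⟩

lemma algebraicConcreteCategory_of_subsingleton [U.Full] [U.Faithful]
    (hU : ∀ X, Subsingleton (U.obj X)) (L : Type u → D)
    (hL : ∀ S, Nonempty (U.obj (L S)) ↔ Nonempty S) :
    AlgebraicConcreteCategory U := by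
  have hthin : Quiver.IsThin D := fun X Y =>
    ⟨fun f g => U.map_injective (ConcreteCategory.hom_ext _ _ fun _ => Subsingleton.elim _ _)⟩
  have hcoeq : HasCoequalizers D := by
    refine @hasCoequalizers_of_hasColimit_parallelPair _ _ fun {X Y f g} => ?_
    obtain rfl := Subsingleton.elim f g
    infer_instance
  have hfun : ∀ S X, Subsingleton (S ⟶ U.obj X) := fun S X => TypeCat.homEquiv.subsingleton
  let e : ∀ S X, (L S ⟶ X) ≃ (S ⟶ U.obj X) := fun S X =>
    { toFun φ := TypeCat.ofHom fun s => U.map φ (Classical.choice ((hL S).2 ⟨s⟩))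
      invFun g := U.preimage (TypeCat.ofHom fun l => g (Classical.choice ((hL S).1 ⟨l⟩)))
      left_inv _ := Subsingleton.elim _ _
      right_inv _ := Subsingleton.elim _ _ }
  have hadj := Adjunction.adjunctionOfEquivLeft e fun _ _ _ _ _ => Subsingleton.elim _ _
  refine ⟨hcoeq, hadj.isRightAdjoint, fun A B f ⟨hf⟩ => ?_,
    fun A B f => U.regularEpi_of_regularEpi_map f⟩
  have : IsIso f := isIso_colimit_cocone_parallelPair_of_eq (Subsingleton.elim _ _) hf.isColimit
  exact ⟨RegularEpi.ofSplitEpi (U.map f)⟩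

end CategoryTheory.Functor

open Function

theorem isIndiscreteTop_iff {X : Type u} (t : TopologicalSpace X) :
    IsIndiscreteTop X t ↔ IndiscreteTopology X := by
  refine ⟨fun h => ⟨top_unique fun s hs => ?_⟩, fun _ s => ?_⟩
  · exact (TopologicalSpace.isOpen_top_iff s).2 (h s hs)
  · exact (IndiscreteTopology.isOpen_iff s).1

theorem Function.injective_update_const {Z X : Type*} [DecidableEq Z] {x y : X} (hxy : x ≠ y) :
    Injective fun z : Z => update (fun _ => y) z x := by
  intro z z' h
  by_contra hne
  have := congrFun h z
  simp only [update_self, update_of_ne hne] at this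
  exact hxy this

theorem isEmbedding_update_const_of_isOpen {Z X : Type*} [TopologicalSpace Z] [DiscreteTopology Z]
    [DecidableEq Z] [TopologicalSpace X] {s : Set X} (hs : IsOpen s) {x y : X} (hx : x ∈ s)
    (hy : y ∉ s) : IsEmbedding fun z : Z => update (fun _ => y) z x := by
  refine ⟨⟨?_⟩, Function.injective_update_const (ne_of_mem_of_not_mem hx hy)⟩
  rw [DiscreteTopology.eq_bot (α := Z)]
  refine (eq_bot_of_singletons_open fun z => isOpen_induced_iff.2
    ⟨(fun f : Z → X => f z) ⁻¹' s, hs.preimage (continuous_apply z), ?_⟩).symm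
  ext w
  by_cases hwz : z = w
  · subst hwz; simp [hx]
  · simp [update_of_ne hwz, hy, Ne.symm hwz]

theorem isEmbedding_update_const_of_indiscrete {Z X : Type*} [TopologicalSpace Z]
    [IndiscreteTopology Z] [DecidableEq Z] [TopologicalSpace X] [IndiscreteTopology X] {x y : X}
    (hxy : x ≠ y) :
    IsEmbedding fun z : Z => update (fun _ => y) z x := by
  refine ⟨⟨?_⟩, Function.injective_update_const hxy⟩
  rw [IndiscreteTopology.eq_top Z, IndiscreteTopology.eq_top (Z → X), induced_top]

theorem not_discreteTopology_pi {ι X : Type*} [Infinite ι] [TopologicalSpace X] [Nontrivial X] :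
    ¬ DiscreteTopology (ι → X) := by
  classical
  intro hdisc
  obtain ⟨x, y, hxy⟩ := exists_pair_ne X
  obtain ⟨I, u, hu, hsub⟩ :=
    isOpen_pi_iff.1 (isOpen_discrete ({fun _ => y} : Set (ι → X))) (fun _ => y) rfl
  obtain ⟨i, hi⟩ := Infinite.exists_notMem_finset I
  have hmem : update (fun _ => y) i x ∈ (I : Set ι).pi u := fun j hj => by
    rw [update_of_ne (ne_of_mem_of_not_mem hj hi)]
    exact (hu j hj).2
  have := congrFun (hsub hmem) i
  simp only [update_self] at this
  exact hxy this

namespace TopClass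

instance faithful_U (C : TopClass.{u}) : C.U.Faithful :=
  inferInstanceAs (ObjectProperty.ι _ ⋙ forget TopCat).Faithful

variable {C : TopClass.{u}}

theorem mem_of_subsingleton (hprod : C.ClosedUnderProducts) (hsub : C.ClosedUnderSubspaces)
    {X : Type u} (tX : TopologicalSpace X) [Subsingleton X] : C X tX :=
  hsub _ _ _ tX (hprod PEmpty (fun _ => PUnit) (fun _ => inferInstance) PEmpty.elim)
    ⟨fun _ => PEmpty.elim, IsEmbedding.of_subsingleton _⟩

theorem full_U_of_isIndiscreteTop (hC : ∀ X tX, C X tX → IsIndiscreteTop X tX) : C.U.Full where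
  map_surjective {_ B} g :=
    have := (isIndiscreteTop_iff _).1 (hC _ _ B.property)
    ⟨ObjectProperty.homMk (TopCat.ofHom ⟨g, continuous_of_indiscreteTopology⟩), rfl⟩

theorem eq_of_le_of_algebraic (halg : AlgebraicConcreteCategory C.U) {X : Type u}
    {t₁ t₂ : TopologicalSpace X} (h₁ : C X t₁) (h₂ : C X t₂) (hle : t₁ ≤ t₂) :
    t₁ = t₂ := by
  let f : (⟨@TopCat.of X t₁, h₁⟩ : C.Cat) ⟶ ⟨@TopCat.of X t₂, h₂⟩ :=
    ObjectProperty.homMk (@TopCat.ofHom X X t₁ t₂ (@ContinuousMap.mk X X t₁ t₂ id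
      (continuous_id_iff_le.2 hle)))
  have : IsIso f := C.U.isIso_of_bijective_map halg.2.2.2 f (show Bijective id from bijective_id)
  let e := TopCat.homeoOfIso ((ObjectProperty.ι _).mapIso (asIso f))
  exact le_antisymm hle (continuous_id_iff_le.1 (e.symm.continuous.congr e.apply_symm_apply))

theorem isIndiscreteTop_of_algebraic (hprod : C.ClosedUnderProducts)
    (hsub : C.ClosedUnderSubspaces) (halg : AlgebraicConcreteCategory C.U) {X : Type u}
    {tX : TopologicalSpace X} (hX : C X tX) : IsIndiscreteTop X tX := by
  classical
  intro s hs
  by_contra! hs_proper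
  obtain ⟨⟨x, hx⟩, hs_ne_univ⟩ := hs_proper
  obtain ⟨y, hy⟩ := (Set.ne_univ_iff_exists_notMem s).1 hs_ne_univ
  have : Nontrivial X := ⟨x, y, ne_of_mem_of_not_mem hx hy⟩
  let Z := ULift.{u} ℕ → X
  have hZ : C Z Pi.topologicalSpace := hprod _ _ _ fun _ => hX
  have hZdisc : C Z ⊥ := hsub _ _ _ ⊥ (hprod Z (fun _ => X) (fun _ => tX) fun _ => hX)
    ⟨_, @isEmbedding_update_const_of_isOpen Z X ⊥ (discreteTopology_bot Z) _ _ _ hs _ _ hx hy⟩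
  exact not_discreteTopology_pi ⟨(eq_of_le_of_algebraic halg hZdisc hZ bot_le).symm⟩

theorem subsingleton_or_indiscrete_of_algebraic (hprod : C.ClosedUnderProducts)
    (hsub : C.ClosedUnderSubspaces) (halg : AlgebraicConcreteCategory C.U) :
    (∀ X tX, C X tX ↔ Subsingleton X) ∨ (∀ X tX, C X tX ↔ IsIndiscreteTop X tX) := by
  have hind := @isIndiscreteTop_of_algebraic C hprod hsub halg
  by_cases hbig : ∃ X tX, C X tX ∧ Nontrivial X
  · obtain ⟨X, tX, hX, x, y, hxy⟩ := hbig
    refine .inr fun Z tZ => ⟨hind, fun hZ => ?_⟩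
    classical
    have := (isIndiscreteTop_iff tX).1 (hind hX)
    have := (isIndiscreteTop_iff tZ).1 hZ
    exact hsub _ _ _ tZ (hprod Z (fun _ => X) (fun _ => tX) fun _ => hX)
      ⟨_, isEmbedding_update_const_of_indiscrete hxy⟩
  · push Not at hbig
    exact .inl fun X tX => ⟨hbig X tX, fun _ => mem_of_subsingleton hprod hsub tX⟩

theorem algebraic_of_forall_subsingleton (hC : ∀ X tX, C X tX ↔ Subsingleton X) :
    AlgebraicConcreteCategory C.U := by
  have : C.U.Full := full_U_of_isIndiscreteTop fun X tX h =>
    have := (hC X tX).1 h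
    (isIndiscreteTop_iff tX).2 inferInstance
  exact C.U.algebraicConcreteCategory_of_subsingleton (fun A => (hC _ _).1 A.property)
    (fun S => ⟨@TopCat.of (Trunc S) ⊥, (hC _ _).2 inferInstance⟩)
    (fun S => ⟨fun ⟨t⟩ => ⟨t.out⟩, fun ⟨s⟩ => ⟨Trunc.mk s⟩⟩)

theorem algebraic_of_forall_indiscrete (hC : ∀ X tX, C X tX ↔ IsIndiscreteTop X tX) :
    AlgebraicConcreteCategory C.U := by
  have : C.U.Full := full_U_of_isIndiscreteTop fun X tX => (hC X tX).1
  have : C.U.EssSurj :=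
    ⟨fun S => ⟨⟨@TopCat.of S ⊤, (hC _ _).2 ((isIndiscreteTop_iff _).2 inferInstance)⟩,
      ⟨Iso.refl S⟩⟩⟩
  have : C.U.IsEquivalence := {}
  exact C.U.algebraicConcreteCategory_of_isEquivalence

end TopClass

theorem epireflective_algebraic_Top_general
    (C : TopClass.{u})
    (hprod : C.ClosedUnderProducts) (hsub : C.ClosedUnderSubspaces) :
    AlgebraicConcreteCategory C.U ↔
      ((∀ (X : Type u) (tX : TopologicalSpace X), C X tX ↔ Subsingleton X) ∨
       (∀ (X : Type u) (tX : TopologicalSpace X), C X tX ↔ IsIndiscreteTop X tX)) :=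
  ⟨C.subsingleton_or_indiscrete_of_algebraic hprod hsub, fun h =>
    h.elim TopClass.algebraic_of_forall_subsingleton TopClass.algebraic_of_forall_indiscrete⟩

theorem epireflective_algebraic_Top
    (C : TopClass.{u}) (hiso : C.IsoClosed)
    (hprod : C.ClosedUnderProducts) (hsub : C.ClosedUnderSubspaces) :
    AlgebraicConcreteCategory C.U ↔
      ((∀ (X : Type u) (tX : TopologicalSpace X), C X tX ↔ Subsingleton X) ∨
       (∀ (X : Type u) (tX : TopologicalSpace X), C X tX ↔ IsIndiscreteTop X tX)) :=
  epireflective_algebraic_Top_general C hprod hsub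
end

section
/- Let C be an isomorphism-closed class of uniform spaces each of which is indiscrete, and suppose C is algebraic, i.e. the full subcategory C of uniform spaces has coequalizers, its underlying-set functor U : C → Set has a left adjoint, and U preserves and reflects regular epimorphisms. Then C is the class of all one-point uniform spaces, or the class of all uniform spaces with at most one point, or the class of all indiscrete uniform spaces. -/
/-!
Every map into an indiscrete space is uniformly continuous, so `C` behaves like a class of sets
closed under bijections, with all functions as morphisms. Let `F ⊣ U`. If some member `B` has
two distinct points, two-valued test maps into `B` show that the unit `X → U (F X)` is injective,
and also surjective, because maps `U (F X) → U B` that agree on its image are transposes of the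
same map `X → U B`. Hence every set carries a member and `C` is the class of all indiscrete
spaces. Otherwise all members are subsingletons, and `U (F 1)` is a nonempty member, so all
one-point spaces lie in `C`; whether the empty space does decides between the first two
alternatives.
-/

universe u

open Uniformity CategoryTheory CategoryTheory.Limits

/-- A class of uniform spaces (in a fixed universe `u`). -/
abbrev UnifClass := ∀ X : Type u, UniformSpace X → Prop

/-- `C` is closed under uniform isomorphisms. -/
def UnifClass.IsoClosed (C : UnifClass.{u}) : Prop :=
  ∀ (X Y : Type u) (uX : UniformSpace X) (uY : UniformSpace Y),
    C X uX → Nonempty (@UniformEquiv X Y uX uY) → C Y uY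

/-- A uniform space is indiscrete if its only entourage is the whole square. -/
def IsIndiscreteUnif (X : Type u) (uX : UniformSpace X) : Prop :=
  ∀ V ∈ @uniformity X uX, V = Set.univ

/-- The full subcategory of `UniformSpaceCat` determined by a class of uniform spaces. -/
abbrev UnifClass.Cat (C : UnifClass.{u}) : Type (u + 1) :=
  ObjectProperty.FullSubcategory (fun X : UniformSpaceCat.{u} => C X X.str)

/-- The underlying-set functor of the full subcategory determined by `C`. -/
noncomputable def UnifClass.U (C : UnifClass.{u}) : C.Cat ⥤ Type u :=
  ObjectProperty.ι _ ⋙ forget UniformSpaceCat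

namespace CategoryTheory.Adjunction

variable {D : Type*} [Category D] {F : Type u ⥤ D} {U : D ⥤ Type u} (adj : F ⊣ U)

lemma map_unit_app_apply {X : Type u} {B : D} (g : F.obj X ⟶ B) (x : X) :
    U.map g (adj.unit.app X x) = adj.homEquiv X B g x := by
  simp [homEquiv_unit]

lemma unit_app_injective_of_ne {B : D} {b₁ b₂ : U.obj B} (hb : b₁ ≠ b₂) (X : Type u) :
    Function.Injective (adj.unit.app X) := by
  classical
  intro x y hxy
  by_contra hne
  let g : F.obj X ⟶ B :=
    (adj.homEquiv X B).symm (TypeCat.ofHom fun z => if z = x then b₁ else b₂)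
  have hgx := adj.map_unit_app_apply g x
  have hgy := adj.map_unit_app_apply g y
  simp only [g, Equiv.apply_symm_apply, TypeCat.ofHom_apply, if_neg (Ne.symm hne)] at hgx hgy
  exact hb (hgx.symm.trans (hxy ▸ hgy))

lemma unit_app_surjective_of_ne {B : D} {b₁ b₂ : U.obj B} (hb : b₁ ≠ b₂) (X : Type u)
    (hfull : ∀ h : U.obj (F.obj X) → U.obj B, ∃ g : F.obj X ⟶ B, ∀ y, U.map g y = h y) :
    Function.Surjective (adj.unit.app X) := by
  classical
  intro y
  by_contra hy
  push Not at hy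
  obtain ⟨g₁, hg₁⟩ := hfull fun _ => b₁
  obtain ⟨g₂, hg₂⟩ := hfull fun z => if z = y then b₂ else b₁
  have hg : g₁ = g₂ := (adj.homEquiv X B).injective <| by
    refine ConcreteCategory.hom_ext _ _ fun x => ?_
    rw [← map_unit_app_apply, ← map_unit_app_apply, hg₁, hg₂, if_neg (hy x)]
  have := hg₁ y
  rw [hg, hg₂, if_pos rfl] at this
  exact hb this.symm

end CategoryTheory.Adjunction

lemma isIndiscreteUnif_iff_eq_top {X : Type u} {uX : UniformSpace X} :
    IsIndiscreteUnif X uX ↔ uX = ⊤ := by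
  constructor
  · intro h
    refine UniformSpace.ext (top_unique fun s hs => ?_)
    rw [h s hs]
    exact Filter.univ_mem
  · rintro rfl s hs
    exact Filter.mem_top.1 hs

lemma UniformSpace.eq_top_of_subsingleton {X : Type u} [Subsingleton X] (uX : UniformSpace X) :
    uX = ⊤ := by
  have hid : (SetRel.id : SetRel X X) = Set.univ :=
    Set.eq_univ_of_forall fun p => Subsingleton.elim p.1 p.2
  exact UniformSpace.ext (top_unique (by simpa [hid] using refl_le_uniformity (α := X)))

lemma forall_iff_nonempty_and_subsingleton_or_forall_iff_subsingleton {S : Type u → Prop}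
    (hS : ∀ {X Y : Type u}, S X → (X ≃ Y) → S Y) (hsub : ∀ X, S X → Subsingleton X)
    {P : Type u} [Nonempty P] (hP : S P) :
    (∀ X, S X ↔ Nonempty X ∧ Subsingleton X) ∨ (∀ X, S X ↔ Subsingleton X) := by
  have hpoint : ∀ X, Nonempty X → Subsingleton X → S X := fun X ⟨x⟩ _ =>
    have := hsub P hP
    hS hP (equivOfSubsingletonOfSubsingleton (fun _ => x) fun _ => Classical.arbitrary P)
  by_cases hempty : ∃ E, IsEmpty E ∧ S E
  · obtain ⟨E, hE, hSE⟩ := hempty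
    refine Or.inr fun X => ⟨hsub X, fun _ => ?_⟩
    rcases isEmpty_or_nonempty X with hX | hX
    · exact hS hSE (Equiv.equivOfIsEmpty E X)
    · exact hpoint X hX ‹_›
  · refine Or.inl fun X => ⟨fun h => ⟨?_, hsub X h⟩, fun ⟨hn, hs⟩ => hpoint X hn hs⟩
    by_contra hX
    exact hempty ⟨X, not_nonempty_iff.1 hX, h⟩

namespace UnifClass

variable {C : UnifClass.{u}}

lemma IsoClosed.mem_top_of_equiv (hiso : C.IsoClosed) {X Y : Type u} (h : C X ⊤) (e : X ≃ Y) :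
    C Y ⊤ :=
  letI : UniformSpace X := ⊤
  letI : UniformSpace Y := ⊤
  hiso X Y ⊤ ⊤ h
    ⟨{ e with uniformContinuous_toFun := le_top, uniformContinuous_invFun := le_top }⟩

lemma mem_iff_eq_top_and_mem_top
    (hind : ∀ (X : Type u) (uX : UniformSpace X), C X uX → IsIndiscreteUnif X uX)
    {X : Type u} {uX : UniformSpace X} : C X uX ↔ uX = ⊤ ∧ C X ⊤ :=
  ⟨fun h => have ht := isIndiscreteUnif_iff_eq_top.1 (hind X uX h); ⟨ht, ht ▸ h⟩,
    fun ⟨ht, h⟩ => ht ▸ h⟩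

lemma mem_top_of_obj
    (hind : ∀ (X : Type u) (uX : UniformSpace X), C X uX → IsIndiscreteUnif X uX)
    (A : C.Cat) : C (C.U.obj A) ⊤ :=
  ((mem_iff_eq_top_and_mem_top hind).1 A.property).2

lemma exists_map_eq {A B : C.Cat} (hB : IsIndiscreteUnif B.obj.carrier B.obj.str)
    (h : C.U.obj A → C.U.obj B) : ∃ g : A ⟶ B, ∀ a, C.U.map g a = h a :=
  ⟨ObjectProperty.homMk (UniformSpaceCat.ofHom ⟨h, fun s hs => hB s hs ▸ Filter.univ_mem⟩),
    fun _ => rfl⟩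

end UnifClass

theorem algebraic_class_of_indiscrete_Unif
    (C : UnifClass.{u}) (hiso : C.IsoClosed)
    (hind : ∀ (X : Type u) (uX : UniformSpace X), C X uX → IsIndiscreteUnif X uX)
    (halg : AlgebraicConcreteCategory C.U) :
    (∀ (X : Type u) (uX : UniformSpace X), C X uX ↔ (Nonempty X ∧ Subsingleton X)) ∨
    (∀ (X : Type u) (uX : UniformSpace X), C X uX ↔ Subsingleton X) ∨
    (∀ (X : Type u) (uX : UniformSpace X), C X uX ↔ IsIndiscreteUnif X uX) := by
  obtain ⟨-, hU, -⟩ := halg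
  obtain ⟨F, ⟨adj⟩⟩ := hU.exists_leftAdjoint
  have hmem : ∀ X uX, C X uX ↔ uX = ⊤ ∧ C X ⊤ := fun _ _ =>
    C.mem_iff_eq_top_and_mem_top hind
  by_cases hbig : ∃ A : C.Cat, Nontrivial (C.U.obj A)
  · obtain ⟨A, hA⟩ := hbig
    obtain ⟨b₁, b₂, hb⟩ := hA.exists_pair_ne
    have hall : ∀ X : Type u, C X ⊤ := fun X =>
      hiso.mem_top_of_equiv (C.mem_top_of_obj hind (F.obj X)) (Equiv.ofBijective _
        ⟨adj.unit_app_injective_of_ne hb X,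
          adj.unit_app_surjective_of_ne hb X (C.exists_map_eq (hind _ _ A.property))⟩).symm
    exact Or.inr <| Or.inr fun X uX => by
      rw [hmem, isIndiscreteUnif_iff_eq_top, and_iff_left (hall X)]
  · have hsub : ∀ X, C X ⊤ → Subsingleton X := fun X hX =>
      not_nontrivial_iff_subsingleton.1 fun h => hbig ⟨⟨@UniformSpaceCat.of X ⊤, hX⟩, h⟩
    have hC : ∀ X uX, C X uX ↔ C X ⊤ := fun X uX => (hmem X uX).trans
      ⟨And.right, fun h => ⟨@UniformSpace.eq_top_of_subsingleton _ (hsub X h) uX, h⟩⟩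
    have : Nonempty (C.U.obj (F.obj PUnit)) := ⟨adj.unit.app PUnit PUnit.unit⟩
    rcases forall_iff_nonempty_and_subsingleton_or_forall_iff_subsingleton hiso.mem_top_of_equiv
      hsub (C.mem_top_of_obj hind (F.obj PUnit)) with h | h
    · exact Or.inl fun X uX => (hC X uX).trans (h X)
    · exact Or.inr <| Or.inl fun X uX => (hC X uX).trans (h X)
end

section
/- Let C be an isomorphism-closed class of separated uniform spaces that is closed under products, closed under closed subspaces, and closed under dense images. If C contains a space with at least two points and also contains a space that is not compact, then the half-open interval (0,1], equipped with the uniformity induced from the standard metric uniformity of the real line, belongs to C. -/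
universe u

open Uniformity

/-- A uniform space is separated if the intersection of all entourages is the diagonal. -/
def IsSeparatedUnif (X : Type u) (uX : UniformSpace X) : Prop :=
  ∀ x y : X, (∀ V ∈ @uniformity X uX, (x, y) ∈ V) → x = y

/-- `C` is closed under arbitrary products (with the product uniformity). -/
def UnifClass.ClosedUnderProducts (C : UnifClass.{u}) : Prop :=
  ∀ (ι : Type u) (X : ι → Type u) (t : ∀ i, UniformSpace (X i)),
    (∀ i, C (X i) (t i)) → C (∀ i, X i) (@Pi.uniformSpace ι X t)

/-- `C` is closed under closed subspaces (uniform embeddings with closed range). -/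
def UnifClass.ClosedUnderClosedSubspaces (C : UnifClass.{u}) : Prop :=
  ∀ (X Y : Type u) (uX : UniformSpace X) (uY : UniformSpace Y),
    C X uX →
    (∃ f : Y → X, @IsUniformEmbedding Y X uY uX f ∧
      @IsClosed X uX.toTopologicalSpace (Set.range f)) → C Y uY

/-- `C` is closed under dense images: images of uniformly continuous maps
with dense range, landing in separated uniform spaces. -/
def UnifClass.ClosedUnderDenseImages (C : UnifClass.{u}) : Prop :=
  ∀ (X Y : Type u) (uX : UniformSpace X) (uY : UniformSpace Y),
    C X uX → IsSeparatedUnif Y uY →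
    (∃ f : X → Y, @UniformContinuous X Y uX uY f ∧
      @DenseRange Y uY.toTopologicalSpace X f) → C Y uY

/-!
Two distinct points of a separated member of `C` form a closed discrete subspace, so `C` contains
the Cantor space `ℕ → {x, y}` and hence, as its continuous images, all compact metric spaces,
`[0, 1]` among them. A noncompact `X` sits topologically in the cube `[0, 1] ^ I` indexed by its
uniformly continuous maps to `[0, 1]` (uniform Urysohn, through a coarser pseudometric), so its
image there is not closed; gluing `(0, 1]` at a missing limit point finishes the proof.
-/

open Filter Set Topology
open scoped SetRel

theorem isSeparatedUnif_iff_t0Space {X : Type u} [uX : UniformSpace X] :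
    IsSeparatedUnif X uX ↔ T0Space X :=
  t0Space_iff_uniformity.symm

theorem Metric.exists_uniformContinuous_Icc_zero_one {X : Type*} [PseudoMetricSpace X] (x : X)
    {ε : ℝ} (hε : 0 < ε) :
    ∃ f : X → Icc (0 : ℝ) 1, UniformContinuous f ∧ (f x : ℝ) = 0 ∧
      ∀ y, ε ≤ dist x y → (f y : ℝ) = 1 :=
  ⟨fun y => projIcc 0 1 zero_le_one (dist x y / ε),
    (LipschitzWith.projIcc zero_le_one).uniformContinuous.comp
      ((uniformContinuous_const.dist uniformContinuous_id).div_const' ε),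
    by simp, fun y hy => by simp [projIcc_of_right_le _ ((one_le_div hε).2 hy)]⟩

section UniformUrysohn

variable {X : Type*} [UniformSpace X]

theorem exists_seq_symm_comp_subset {V : SetRel X X} (hV : V ∈ 𝓤 X) :
    ∃ W : ℕ → SetRel X X, (∀ n, W n ∈ 𝓤 X) ∧ (∀ n, (W n).IsSymm) ∧
      (∀ n, W (n + 1) ○ W (n + 1) ⊆ W n) ∧ W 0 ⊆ V := by
  have half_exists (s : {s : SetRel X X // s ∈ 𝓤 X}) :
      ∃ t : {t : SetRel X X // t ∈ 𝓤 X}, SetRel.IsSymm t.1 ∧ t.1 ○ t.1 ⊆ s.1 := by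
    obtain ⟨t, ht, hts, hst⟩ := comp_symm_mem_uniformity_sets s.2
    exact ⟨⟨t, ht⟩, hts, hst⟩
  choose half hhalf using half_exists
  refine ⟨fun n => (half^[n + 1] ⟨V, hV⟩).1, fun n => (half^[n + 1] _).2, fun n => ?_,
    fun n => ?_, (subset_comp_self_of_mem_uniformity (half ⟨V, hV⟩).2).trans (hhalf _).2⟩
  · dsimp only
    rw [Function.iterate_succ_apply']
    exact (hhalf _).1
  · dsimp only
    rw [Function.iterate_succ_apply' half (n + 1)]
    exact (hhalf _).2

/-- The coarser uniformity is the one generated by a sequence `W n` with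
`W (n + 1) ○ W (n + 1) ⊆ W n`; being countably generated, it is pseudometrizable. -/
theorem exists_pseudoMetricSpace_le {V : SetRel X X} (hV : V ∈ 𝓤 X) :
    ∃ m : PseudoMetricSpace X, ‹UniformSpace X› ≤ m.toUniformSpace ∧
      V ∈ 𝓤[m.toUniformSpace] := by
  obtain ⟨W, hWu, hWsymm, hWcomp, hWV⟩ := exists_seq_symm_comp_subset hV
  have hWanti : Antitone W := antitone_nat_of_succ_le fun n =>
    (subset_comp_self_of_mem_uniformity (hWu (n + 1))).trans (hWcomp n)
  have hbasis := HasAntitoneBasis.iInf_principal hWanti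
  let core : UniformSpace.Core X := .mk' (⨅ n, 𝓟 (W n))
    (fun _ hr x => let ⟨n, hn⟩ := hbasis.mem_iff.1 hr; hn (refl_mem_uniformity (hWu n)))
    (fun _ hr => let ⟨n, hn⟩ := hbasis.mem_iff.1 hr
      hbasis.mem_iff.2 ⟨n, fun p hp => hn ((hWsymm n).symm _ _ hp)⟩)
    (fun _ hr => let ⟨n, hn⟩ := hbasis.mem_iff.1 hr
      ⟨W (n + 1), hbasis.mem (n + 1), (hWcomp n).trans hn⟩)
  let _ : UniformSpace X := .ofCore core
  have : (𝓤 X).IsCountablyGenerated := isCountablyGenerated_seq W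
  obtain ⟨m, hm⟩ := UniformSpace.metrizable_uniformity X
  refine ⟨m, ?_, ?_⟩ <;> rw [hm]
  · exact UniformSpace.le_def.2 (le_iInf fun n => le_principal_iff.2 (hWu n))
  · exact hbasis.mem_iff.2 ⟨0, hWV⟩

theorem exists_uniformContinuous_Icc_zero_one (x : X) {V : SetRel X X} (hV : V ∈ 𝓤 X) :
    ∃ f : X → Icc (0 : ℝ) 1, UniformContinuous f ∧ (f x : ℝ) = 0 ∧
      ∀ y, (x, y) ∉ V → (f y : ℝ) = 1 := by
  obtain ⟨m, hle, hVm⟩ := exists_pseudoMetricSpace_le hV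
  obtain ⟨ε, hε, hεV⟩ := @Metric.mem_uniformity_dist X m V |>.1 hVm
  obtain ⟨f, hf, hfx, hf1⟩ := @Metric.exists_uniformContinuous_Icc_zero_one X m x ε hε
  exact ⟨f, hf.mono_left (UniformSpace.le_def.1 hle), hfx,
    fun y hy => hf1 y (not_lt.1 fun h => hy (hεV h))⟩

end UniformUrysohn

section UnitCube

variable (X : Type*) [UniformSpace X]

abbrev UnitCube : Type _ := {f : X → Icc (0 : ℝ) 1 // UniformContinuous f} → Icc (0 : ℝ) 1

def unitCubeMap (x : X) : UnitCube X := fun f => f.1 x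

variable {X}

theorem uniformContinuous_unitCubeMap : UniformContinuous (unitCubeMap X) :=
  uniformContinuous_pi.2 fun f => f.2

theorem isInducing_unitCubeMap : IsInducing (unitCubeMap X) := by
  refine isInducing_iff_nhds.2 fun x => le_antisymm
    (uniformContinuous_unitCubeMap.continuous.tendsto x).le_comap ?_
  intro N hN
  obtain ⟨V, hV, hVN⟩ := UniformSpace.mem_nhds_iff.1 hN
  obtain ⟨f, hf, hfx, hf1⟩ := exists_uniformContinuous_Icc_zero_one x hV
  have hcont : Continuous fun v : UnitCube X => (v ⟨f, hf⟩ : ℝ) :=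
    continuous_subtype_val.comp (continuous_apply _)
  have hlt : {v : UnitCube X | (v ⟨f, hf⟩ : ℝ) < 1} ∈ 𝓝 (unitCubeMap X x) :=
    hcont.continuousAt.preimage_mem_nhds
      (Iio_mem_nhds (show (unitCubeMap X x ⟨f, hf⟩ : ℝ) < 1 by simp [unitCubeMap, hfx]))
  refine mem_comap.2 ⟨_, hlt, fun y hy => hVN ?_⟩
  by_contra hyV
  exact (hy : (f y : ℝ) < 1).ne (hf1 y hyV)

theorem not_isClosed_range_unitCubeMap (hX : ¬ CompactSpace X) :
    ¬ IsClosed (range (unitCubeMap X)) := fun hclosed =>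
  hX (isCompact_univ_iff.1 (isInducing_unitCubeMap.isCompact_iff.2
    (image_univ ▸ hclosed.isCompact)))

end UnitCube

namespace UnifClass

variable {C : UnifClass.{0}}

theorem prod_mem (hiso : C.IsoClosed) (hprod : C.ClosedUnderProducts) {X Y : Type}
    [uX : UniformSpace X] [uY : UniformSpace Y] (hX : C X uX) (hY : C Y uY) :
    C (X × Y) inferInstance := by
  let u : ∀ i, UniformSpace (![X, Y] i) := Fin.cases uX (Fin.cases uY finZeroElim)
  exact hiso _ (X × Y) _ _ (hprod (Fin 2) ![X, Y] u (Fin.cases hX (Fin.cases hY finZeroElim)))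
    ⟨UniformEquiv.piFinTwo ![X, Y]⟩

theorem mem_of_compactSpace (hprod : C.ClosedUnderProducts)
    (hclsub : C.ClosedUnderClosedSubspaces) (hdense : C.ClosedUnderDenseImages) {X : Type}
    [uX : UniformSpace X] [T0Space X] (hX : C X uX) {x y : X} (hxy : x ≠ y) (K : Type)
    [MetricSpace K] [CompactSpace K] [Nonempty K] : C K inferInstance := by
  classical
  let S : Set X := {x, y}
  have hS : C S inferInstance := hclsub X S _ _ hX
    ⟨Subtype.val, isUniformEmbedding_subtype_val, by simpa using (Set.toFinite S).isClosed⟩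
  let x' : S := ⟨x, by simp [S]⟩
  let y' : S := ⟨y, by simp [S]⟩
  -- `ℕ → S` is a Cantor space; read its points as binary sequences
  let toBool (v : ℕ → S) (n : ℕ) : Bool := decide (v n = y')
  have htoBool : Continuous toBool :=
    continuous_pi fun n =>
      (continuous_of_discreteTopology (f := fun s : S => decide (s = y'))).comp (continuous_apply n)
  have htoBool_surj : Function.Surjective toBool := fun b =>
    ⟨fun n => if b n then y' else x', funext fun n => by
      cases h : b n <;> simp [toBool, x', y', h, Subtype.ext_iff, hxy]⟩
  obtain ⟨f, hf, hf_surj⟩ := exists_nat_bool_continuous_surjective_of_compact K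
  exact hdense (ℕ → S) K _ _ (hprod ℕ _ _ fun _ => hS)
    (isSeparatedUnif_iff_t0Space.2 inferInstance)
    ⟨f ∘ toBool, CompactSpace.uniformContinuous_of_continuous (hf.comp htoBool),
      (hf_surj.comp htoBool_surj).denseRange⟩

/-- Glue a copy of `(0, 1]` to `range e × [0, 1]` at a point `q` of the closure of `range e`
outside it: the result is a dense image of `X × [0, 1]`, and `{q} × (0, 1]` is closed in it. -/
theorem Ioc_mem_of_mem_closure_range (hiso : C.IsoClosed) (hprod : C.ClosedUnderProducts)
    (hclsub : C.ClosedUnderClosedSubspaces) (hdense : C.ClosedUnderDenseImages)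
    {X K : Type} [uX : UniformSpace X] [UniformSpace K] [T0Space K] (hX : C X uX)
    (hI : C (Icc (0 : ℝ) 1) inferInstance) {e : X → K} (he : UniformContinuous e) {q : K}
    (hq : q ∈ closure (range e)) (hqe : q ∉ range e) : C (Ioc (0 : ℝ) 1) inferInstance := by
  let Y : Set (K × ℝ) := range e ×ˢ Icc 0 1 ∪ {q} ×ˢ Ioc 0 1
  let g (p : X × Icc (0 : ℝ) 1) : Y := ⟨(e p.1, p.2), .inl ⟨mem_range_self _, p.2.2⟩⟩
  have hg : UniformContinuous g :=
    ((he.comp uniformContinuous_fst).prodMk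
      (uniformContinuous_subtype_val.comp uniformContinuous_snd)).subtype_mk _
  have hg_dense : DenseRange g := by
    refine Subtype.dense_iff.2 ?_
    rw [← range_comp, show Subtype.val ∘ g = Prod.map e Subtype.val from rfl, range_prodMap,
      Subtype.range_coe, closure_prod_eq, isClosed_Icc.closure_eq]
    exact union_subset (prod_mono subset_closure subset_rfl)
      (prod_mono (singleton_subset_iff.2 hq) Ioc_subset_Icc_self)
  have hY : C Y inferInstance := hdense _ Y _ _ (prod_mem hiso hprod hX hI)
    (isSeparatedUnif_iff_t0Space.2 inferInstance) ⟨g, hg, hg_dense⟩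
  let φ (t : Ioc (0 : ℝ) 1) : Y := ⟨(q, t), .inr ⟨rfl, t.2⟩⟩
  have hφ : UniformContinuous φ :=
    (uniformContinuous_const.prodMk uniformContinuous_subtype_val).subtype_mk _
  have hφ_emb : IsUniformEmbedding φ := IsUniformEmbedding.of_comp hφ
    (uniformContinuous_snd.comp uniformContinuous_subtype_val) isUniformEmbedding_subtype_val
  have hφ_range : range φ = (fun p : Y => p.1.1) ⁻¹' {q} := by
    ext ⟨⟨k, t⟩, hkt⟩
    refine ⟨by rintro ⟨s, hs⟩; simp [← hs, φ], fun hk => ?_⟩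
    obtain rfl : k = q := hk
    obtain ⟨hk, -⟩ | ⟨-, ht⟩ := hkt
    · exact absurd hk hqe
    · exact ⟨⟨t, ht⟩, rfl⟩
  exact hclsub Y _ _ _ hY ⟨φ, hφ_emb, hφ_range ▸
    isClosed_singleton.preimage (continuous_fst.comp continuous_subtype_val)⟩

end UnifClass

theorem Ioc_mem_of_nontrivial_noncompact_T2Unif
    (C : UnifClass.{0}) (hiso : C.IsoClosed)
    (hsepC : ∀ (X : Type) (uX : UniformSpace X), C X uX → IsSeparatedUnif X uX)
    (hprod : C.ClosedUnderProducts) (hclsub : C.ClosedUnderClosedSubspaces)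
    (hdense : C.ClosedUnderDenseImages)
    (X₀ : Type) (uX₀ : UniformSpace X₀) (hX₀ : C X₀ uX₀)
    (x y : X₀) (hxy : x ≠ y)
    (X₁ : Type) (uX₁ : UniformSpace X₁) (hX₁ : C X₁ uX₁)
    (hX₁nc : ¬ @CompactSpace X₁ uX₁.toTopologicalSpace) :
    C (Set.Ioc (0 : ℝ) 1) inferInstance := by
  have : T0Space X₀ := isSeparatedUnif_iff_t0Space.1 (hsepC X₀ uX₀ hX₀)
  have hI : C (Icc (0 : ℝ) 1) inferInstance :=
    UnifClass.mem_of_compactSpace hprod hclsub hdense hX₀ hxy _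
  obtain ⟨q, hq, hqe⟩ := not_subset.1 (mt isClosed_of_closure_subset
    (not_isClosed_range_unitCubeMap hX₁nc))
  exact UnifClass.Ioc_mem_of_mem_closure_range hiso hprod hclsub hdense hX₁ hI
    uniformContinuous_unitCubeMap hq hqe
end
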